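/- Let G be bipartite with perfect matching M and auxiliary digraph D(G, M) on vertex set U. For edges e, f ∈ M with corresponding U-endpoints u_e, u_f, there is an M-alternating path in G containing both e and f if and only if there is a directed path from u_e to u_f or from u_f to u_e in D(G, M). -/

import Mathlib

open SimpleGraph

variable {V : Type*}

/-- Two edges alternate with respect to the edge set `S`. -/
def altRel (S : Set (Sym2 V)) (e f : Sym2 V) : Prop := e ∈ S ↔ f ∉ S

/-- `c` is an `S`-alternating cycle: a cycle whose edges alternate between `S` and its
complement (including the wrap-around pair). -/
def IsAltCycle (G : SimpleGraph V) (S : Set (Sym2 V)) {v : V} (c : G.Walk v v) : Prop :=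
  c.IsCycle ∧ List.Chain' (altRel S) c.edges ∧
    ∀ e f, c.edges.head? = some e → c.edges.getLast? = some f → altRel S f e

/-- `G` admits a perfect matching. -/
def HasPM (G : SimpleGraph V) : Prop := ∃ M : G.Subgraph, M.IsPerfectMatching

/-- `G` admits a perfect matching after the deletion of any single edge. -/
def Robust (G : SimpleGraph V) : Prop := ∀ e ∈ G.edgeSet, HasPM (G.deleteEdges {e})

/-- `(U, W)` is a bipartition of `G`. -/
def IsBipartitionOf (G : SimpleGraph V) (U W : Set V) : Prop :=
  (∀ v, v ∈ U ↔ v ∉ W) ∧ ∀ ⦃a b⦄, G.Adj a b → (a ∈ U ↔ b ∈ W)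

/-- `M` is (the edge set of) a perfect matching of `G`. -/
def IsPMSet (G : SimpleGraph V) (M : Set (Sym2 V)) : Prop :=
  M ⊆ G.edgeSet ∧ ∀ v : V, ∃! e, e ∈ M ∧ v ∈ e

/-- The arcs of the auxiliary digraph `D(G, M)` on `U`. -/
def auxArc (G : SimpleGraph V) (M : Set (Sym2 V)) (U W : Set V) (u u' : V) : Prop :=
  u ∈ U ∧ u' ∈ U ∧ ∃ w ∈ W, s(u, w) ∈ M ∧ s(w, u') ∈ G.edgeSet ∧ s(w, u') ∉ M

/-! In `D(G, M)` an arc `u → u'` is the pair of edges `u —M— w —(E∖M)— u'`, so the `U`-endpoints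
of the matching edges met along an `M`-alternating path, read in the direction in which the path
traverses its matching edges from `U` to `W`, form a directed walk of `D(G, M)`; reading it the
other way round swaps the roles of `U` and `W`, which reverses the arcs of `D(G, M)` through the
matching bijection. Conversely, a directed path `u₀ → u₁ → ⋯ → uₖ` without repeated vertices
unfolds into the alternating path `u₀ —M— w₀ — u₁ —M— w₁ — ⋯ — uₖ —M— wₖ`. -/

theorem List.exists_nodup_isChain_cons_of_reflTransGen {α : Type*} {r : α → α → Prop} {a b : α}
    (h : Relation.ReflTransGen r a b) :
    ∃ l : List α, (a :: l).IsChain r ∧ (a :: l).Nodup ∧ (a :: l).getLast? = some b := by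
  induction h using Relation.ReflTransGen.head_induction_on with
  | refl => exact ⟨[], by simp, by simp, rfl⟩
  | @head a c hac _ ih =>
    obtain ⟨l, hchain, hnodup, hlast⟩ := ih
    by_cases ha : a ∈ c :: l
    · obtain ⟨s, t, hst⟩ := List.append_of_mem ha
      rw [hst] at hchain hnodup hlast
      refine ⟨t, hchain.right_of_append, hnodup.of_append_right, ?_⟩
      simpa [List.getLast?_append] using hlast
    · exact ⟨c :: l, hchain.cons_cons hac, List.nodup_cons.mpr ⟨ha, hnodup⟩, hlast⟩

namespace IsBipartitionOf

variable {G : SimpleGraph V} {U W : Set V}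

theorem symm (h : IsBipartitionOf G U W) : IsBipartitionOf G W U :=
  ⟨fun v => by have := h.1 v; tauto, fun _ _ hab => (h.2 hab.symm).symm⟩

theorem mem_right_iff (h : IsBipartitionOf G U W) {v : V} : v ∈ W ↔ v ∉ U := by
  have := h.1 v; tauto

theorem mem_left_iff_of_adj (h : IsBipartitionOf G U W) {a b : V} (hab : G.Adj a b) :
    a ∈ U ↔ b ∉ U := by
  rw [h.2 hab, h.mem_right_iff]

theorem eq_of_mem_left (h : IsBipartitionOf G U W) {e : Sym2 V} (he : e ∈ G.edgeSet)
    {x y : V} (hx : x ∈ U) (hxe : x ∈ e) (hy : y ∈ U) (hye : y ∈ e) : x = y := by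
  by_contra hxy
  rw [(Sym2.mem_and_mem_iff hxy).mp ⟨hxe, hye⟩, mem_edgeSet] at he
  exact (h.mem_left_iff_of_adj he).mp hx hy

end IsBipartitionOf

namespace IsPMSet

variable {G : SimpleGraph V} {M : Set (Sym2 V)}

noncomputable def mate (hM : IsPMSet G M) (v : V) : V :=
  Sym2.Mem.other (hM.2 v).exists.choose_spec.2

variable (hM : IsPMSet G M)

theorem mk_mate_mem (v : V) : s(v, hM.mate v) ∈ M := by
  rw [mate, Sym2.other_spec]
  exact (hM.2 v).exists.choose_spec.1

theorem adj_mate (v : V) : G.Adj v (hM.mate v) :=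
  hM.1 (hM.mk_mate_mem v)

theorem eq_mk_mate_of_mem {e : Sym2 V} (he : e ∈ M) {v : V} (hv : v ∈ e) : e = s(v, hM.mate v) :=
  (hM.2 v).unique ⟨he, hv⟩ ⟨hM.mk_mate_mem v, Sym2.mem_mk_left _ _⟩

theorem eq_mate_of_mk_mem {v w : V} (h : s(v, w) ∈ M) : w = hM.mate v :=
  Sym2.congr_right.mp (hM.eq_mk_mate_of_mem h (Sym2.mem_mk_left _ _))

theorem mate_mate (v : V) : hM.mate (hM.mate v) = v :=
  (hM.eq_mate_of_mk_mem (Sym2.eq_swap ▸ hM.mk_mate_mem v)).symm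

end IsPMSet

section AuxDigraph

variable {G : SimpleGraph V} {U W : Set V} {M : Set (Sym2 V)}

theorem auxArc_mate_of_auxArc_swap (hbip : IsBipartitionOf G U W) (hM : IsPMSet G M) {x y : V}
    (h : auxArc G M W U x y) : auxArc G M U W (hM.mate y) (hM.mate x) := by
  obtain ⟨hxW, hyW, z, hzU, hxzM, hzyE, hzyM⟩ := h
  rw [← hM.eq_mate_of_mk_mem hxzM]
  refine ⟨?_, hzU, y, hyW, Sym2.eq_swap ▸ hM.mk_mate_mem y, Sym2.eq_swap ▸ hzyE,
    Sym2.eq_swap ▸ hzyM⟩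
  exact (hbip.mem_left_iff_of_adj (hM.adj_mate y).symm).mpr (hbip.mem_right_iff.mp hyW)

theorem reflTransGen_auxArc_mate_of_swap (hbip : IsBipartitionOf G U W) (hM : IsPMSet G M)
    {x y : V} (h : Relation.ReflTransGen (auxArc G M W U) x y) :
    Relation.ReflTransGen (auxArc G M U W) (hM.mate y) (hM.mate x) :=
  Relation.reflTransGen_swap.mp <|
    Relation.ReflTransGen.lift (p := Function.swap (auxArc G M U W)) hM.mate
      (fun _ _ => auxArc_mate_of_auxArc_swap hbip hM) _ _ h

/-- The hypothesis on the first edge says that the walk traverses its matching edges from `U`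
to `W`; `g` is the matching edge at the start of the walk, and `u` its `U`-endpoint. -/
theorem reflTransGen_auxArc_of_alternating (hbip : IsBipartitionOf G U W) (hM : IsPMSet G M)
    {f : Sym2 V} (hf : f ∈ M) {uf : V} (huf : uf ∈ U ∧ uf ∈ f) {a b : V} (p : G.Walk a b)
    (hp : p.edges.IsChain (altRel M)) (hhead : ∀ h ∈ p.edges.head?, a ∈ U ↔ h ∈ M)
    (hfp : f ∈ p.edges) {g : Sym2 V} (hg : g ∈ M) (hag : a ∈ g) {u : V} (hu : u ∈ U ∧ u ∈ g) :
    Relation.ReflTransGen (auxArc G M U W) u uf := by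
  induction p generalizing g u with
  | nil => simp at hfp
  | @cons a c b hac q ih =>
    rw [Walk.edges_cons, List.isChain_cons] at hp
    rw [Walk.edges_cons] at hfp
    have hacM : a ∈ U ↔ s(a, c) ∈ M := hhead _ rfl
    have hnext : ∀ h ∈ q.edges.head?, s(a, c) ∈ M ↔ h ∉ M := hp.1
    by_cases ha : a ∈ U
    · obtain rfl : u = a := hbip.eq_of_mem_left (hM.1 hg) hu.1 hu.2 ha hag
      rcases List.mem_cons.mp hfp with rfl | hfq
      · rw [hbip.eq_of_mem_left (hM.1 hf) huf.1 huf.2 ha (Sym2.mem_mk_left _ _)]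
      · refine ih hp.2 (fun h hh => ?_) hfq (hacM.mp ha) (Sym2.mem_mk_right _ _)
          ⟨ha, Sym2.mem_mk_left _ _⟩
        exact iff_of_false ((hbip.mem_left_iff_of_adj hac).mp ha) ((hnext h hh).mp (hacM.mp ha))
    · have hcU : c ∈ U := not_not.mp ((hbip.mem_left_iff_of_adj hac).not.mp ha)
      have hfq : f ∈ q.edges := (List.mem_cons.mp hfp).resolve_left
        fun h => hacM.not.mp ha (h ▸ hf)
      have hguM : s(u, a) ∈ M :=
        (Sym2.mem_and_mem_iff fun h : u = a => ha (h ▸ hu.1)).mp ⟨hu.2, hag⟩ ▸ hg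
      have harc : auxArc G M U W u c :=
        ⟨hu.1, hcU, a, hbip.mem_right_iff.mpr ha, hguM, hac, hacM.not.mp ha⟩
      refine .head harc (ih hp.2 (fun h hh => ?_) hfq (hM.mk_mate_mem c) (Sym2.mem_mk_left _ _)
        ⟨hcU, Sym2.mem_mk_left _ _⟩)
      exact iff_of_true hcU (not_not.mp ((hnext h hh).not.mp (hacM.not.mp ha)))

theorem reflTransGen_auxArc_or_of_alternating_cons (hbip : IsBipartitionOf G U W)
    (hM : IsPMSet G M) {ue uf a c b : V} {f : Sym2 V} (hac : G.Adj a c) (q : G.Walk c b)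
    (hp : (Walk.cons hac q).edges.IsChain (altRel M)) (he : s(a, c) ∈ M)
    (hf : f ∈ M) (hue : ue ∈ U ∧ ue ∈ s(a, c)) (huf : uf ∈ U ∧ uf ∈ f)
    (hfp : f ∈ (Walk.cons hac q).edges) :
    Relation.ReflTransGen (auxArc G M U W) ue uf ∨
      Relation.ReflTransGen (auxArc G M U W) uf ue := by
  by_cases ha : a ∈ U
  · exact .inl <| reflTransGen_auxArc_of_alternating hbip hM hf huf _ hp
      (by simp [ha, he]) hfp he (Sym2.mem_mk_left _ _) hue
  · have haW : a ∈ W := hbip.mem_right_iff.mpr ha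
    have hmate : hM.mate uf ∈ W ∧ hM.mate uf ∈ f :=
      ⟨(hbip.2 (hM.adj_mate uf)).mp huf.1, hM.eq_mk_mate_of_mem hf huf.2 ▸ Sym2.mem_mk_right _ _⟩
    have hreach := reflTransGen_auxArc_mate_of_swap hbip hM <|
      reflTransGen_auxArc_of_alternating hbip.symm hM hf hmate _ hp
        (by simp [haW, he]) hfp he (Sym2.mem_mk_left _ _) ⟨haW, Sym2.mem_mk_left _ _⟩
    have hue_eq : ue = hM.mate a := by
      rw [hM.eq_mk_mate_of_mem he (Sym2.mem_mk_left _ _)] at hue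
      exact (Sym2.mem_iff.mp hue.2).resolve_left fun h => ha (h ▸ hue.1)
    rw [hM.mate_mate, ← hue_eq] at hreach
    exact .inr hreach

theorem reflTransGen_auxArc_or_of_alternating (hbip : IsBipartitionOf G U W) (hM : IsPMSet G M)
    {e f : Sym2 V} (he : e ∈ M) (hf : f ∈ M) {ue uf : V} (hue : ue ∈ U ∧ ue ∈ e)
    (huf : uf ∈ U ∧ uf ∈ f) {a b : V} (p : G.Walk a b) (hp : p.edges.IsChain (altRel M))
    (hep : e ∈ p.edges) (hfp : f ∈ p.edges) :
    Relation.ReflTransGen (auxArc G M U W) ue uf ∨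
      Relation.ReflTransGen (auxArc G M U W) uf ue := by
  induction p with
  | nil => simp at hep
  | cons hac q ih =>
    rcases List.mem_cons.mp hep with rfl | hep'
    · exact reflTransGen_auxArc_or_of_alternating_cons hbip hM hac q hp he hf hue huf hfp
    rcases List.mem_cons.mp hfp with rfl | hfp'
    · exact (reflTransGen_auxArc_or_of_alternating_cons hbip hM hac q hp hf he huf hue hep).symm
    exact ih (List.isChain_cons.mp hp).2 hep' hfp'

/-- The last conjunct is the induction invariant that keeps the walk a path when it is extended
at the front. -/
theorem exists_isPath_of_isChain_auxArc (hbip : IsBipartitionOf G U W) (hM : IsPMSet G M)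
    (l : List V) {u : V} (hchain : (u :: l).IsChain (auxArc G M U W)) (hnodup : (u :: l).Nodup)
    (hU : ∀ x ∈ u :: l, x ∈ U) :
    ∃ (b : V) (p : G.Walk u b), p.IsPath ∧ p.edges.IsChain (altRel M) ∧
      (∀ h ∈ p.edges.head?, h ∈ M) ∧ (∀ x ∈ u :: l, s(x, hM.mate x) ∈ p.edges) ∧
      ∀ v ∈ p.support, v ∈ u :: l ∨ hM.mate v ∈ u :: l := by
  induction l generalizing u with
  | nil =>
    refine ⟨_, .cons (hM.adj_mate u) .nil, ?_, by simp, by simp [hM.mk_mate_mem], by simp, ?_⟩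
    · exact Walk.IsPath.nil.cons (by simpa using (hM.adj_mate u).ne)
    · simp [hM.mate_mate]
  | cons u' l ih =>
    obtain ⟨⟨huU, -, w, hwW, huwM, hwu' : G.Adj w u', hwu'M⟩, hchain'⟩ :=
      List.isChain_cons_cons.mp hchain
    obtain rfl := hM.eq_mate_of_mk_mem huwM
    obtain ⟨hul, hnodup'⟩ := List.nodup_cons.mp hnodup
    obtain ⟨b, p, hpath, hp, hhead, hedges, hsupp⟩ :=
      ih hchain' hnodup' fun x hx => hU x (List.mem_cons_of_mem _ hx)
    have hmateU : hM.mate u ∉ U := (hbip.mem_left_iff_of_adj (hM.adj_mate u)).mp huU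
    have hu : u ∉ p.support := fun hv =>
      (hsupp u hv).elim hul fun h => hmateU (hU _ (List.mem_cons_of_mem _ h))
    have hmate : hM.mate u ∉ p.support := fun hv =>
      (hsupp _ hv).elim (fun h => hmateU (hU _ (List.mem_cons_of_mem _ h)))
        (fun h => hul (hM.mate_mate u ▸ h))
    refine ⟨b, .cons (hM.adj_mate u) (.cons hwu' p), ?_, ?_, by simp [huwM], ?_, ?_⟩
    · exact (hpath.cons hmate).cons (by simp [(hM.adj_mate u).ne, hu])
    · simp only [Walk.edges_cons, List.isChain_cons_cons]
      refine ⟨iff_of_true huwM hwu'M, List.isChain_cons.mpr ⟨fun h hh => ?_, hp⟩⟩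
      exact iff_of_false hwu'M (not_not.mpr (hhead h hh))
    · intro x hx
      rcases List.mem_cons.mp hx with rfl | hx
      · simp
      · simp [hedges x hx]
    · intro v hv
      simp only [Walk.support_cons, List.mem_cons] at hv
      rcases hv with rfl | rfl | hv
      · simp
      · simp [hM.mate_mate]
      · exact (hsupp v hv).imp (List.mem_cons_of_mem _) (List.mem_cons_of_mem _)

theorem exists_alternating_path_of_reflTransGen (hbip : IsBipartitionOf G U W)
    (hM : IsPMSet G M) {u u' : V} (hu : u ∈ U) (h : Relation.ReflTransGen (auxArc G M U W) u u') :
    ∃ (a b : V) (p : G.Walk a b), p.IsPath ∧ p.edges.IsChain (altRel M) ∧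
      s(u, hM.mate u) ∈ p.edges ∧ s(u', hM.mate u') ∈ p.edges := by
  obtain ⟨l, hchain, hnodup, hlast⟩ := List.exists_nodup_isChain_cons_of_reflTransGen h
  have hU : ∀ x ∈ u :: l, x ∈ U :=
    hchain.induction _ _ (fun _ _ harc _ => harc.2.1) fun _ => hu
  obtain ⟨b, p, hpath, hp, -, hedges, -⟩ := exists_isPath_of_isChain_auxArc hbip hM l hchain hnodup hU
  exact ⟨u, b, p, hpath, hp, hedges u List.mem_cons_self, hedges u' (List.mem_of_getLast? hlast)⟩

end AuxDigraph

theorem alternating_path_iff_reachable_general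
    {V : Type*} (G : SimpleGraph V) (U W : Set V)
    (hbip : IsBipartitionOf G U W) (M : Set (Sym2 V)) (hM : IsPMSet G M)
    (e f : Sym2 V) (he : e ∈ M) (hf : f ∈ M)
    (ue uf : V) (hue : ue ∈ U ∧ ue ∈ e) (huf : uf ∈ U ∧ uf ∈ f) :
    (∃ (a b : V) (p : G.Walk a b), p.IsPath ∧ List.Chain' (altRel M) p.edges ∧
        e ∈ p.edges ∧ f ∈ p.edges) ↔
      (Relation.ReflTransGen (auxArc G M U W) ue uf ∨
        Relation.ReflTransGen (auxArc G M U W) uf ue) := by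
  constructor
  · rintro ⟨a, b, p, -, hp, hep, hfp⟩
    exact reflTransGen_auxArc_or_of_alternating hbip hM he hf hue huf p hp hep hfp
  · rw [hM.eq_mk_mate_of_mem he hue.2, hM.eq_mk_mate_of_mem hf huf.2]
    rintro (h | h)
    · exact exists_alternating_path_of_reflTransGen hbip hM hue.1 h
    · obtain ⟨a, b, p, hpath, hp, hu, hu'⟩ := exists_alternating_path_of_reflTransGen hbip hM huf.1 h
      exact ⟨a, b, p, hpath, hp, hu', hu⟩

/-- For matching edges `e, f` with `U`-endpoints `ue, uf`, there is an `M`-alternating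
path of `G` containing both `e` and `f` iff `uf` is reachable from `ue` or `ue` is
reachable from `uf` in the auxiliary digraph `D(G, M)`. -/
theorem alternating_path_iff_reachable
    {V : Type*} [Fintype V] [DecidableEq V] (G : SimpleGraph V) (U W : Set V)
    (hbip : IsBipartitionOf G U W) (M : Set (Sym2 V)) (hM : IsPMSet G M)
    (e f : Sym2 V) (he : e ∈ M) (hf : f ∈ M)
    (ue uf : V) (hue : ue ∈ U ∧ ue ∈ e) (huf : uf ∈ U ∧ uf ∈ f) :
    (∃ (a b : V) (p : G.Walk a b), p.IsPath ∧ List.Chain' (altRel M) p.edges ∧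
        e ∈ p.edges ∧ f ∈ p.edges) ↔
      (Relation.ReflTransGen (auxArc G M U W) ue uf ∨
        Relation.ReflTransGen (auxArc G M U W) uf ue) :=
  alternating_path_iff_reachable_general G U W hbip M hM e f he hf ue uf hue huf
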